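/- arXiv:2212.14021 — 6 statements merged into one kernel-verified Lean document; each statement's English description precedes it below -/
import Mathlib

section
/- Let {Π_k}_{k=1}^{D_S} be a complete set of orthogonal projections on a D-dimensional complex Hilbert space (Π_k Hermitian, Π_k Π_ℓ = δ_{kℓ} Π_k, Σ_k Π_k = 1), and let {A_r}_{r=1}^M be arbitrary linear operators. Define P_S = (1/D) Σ_{k,r} Tr[A_r Π_k A_r† Π_k] and K = (1/D²) Σ_r |Tr A_r|². Then P_S ≥ K. -/
/-!
Pinch each `A` by the projections: `B = ∑ₖ Πₖ A Πₖ` has the same trace as `A`, and, because the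
blocks `Πₖ A Πₖ` are mutually orthogonal, `Tr (B B†) = ∑ₖ Tr (A Πₖ A† Πₖ)`. Cauchy–Schwarz for the
diagonal of `B` gives `|Tr B|² ≤ D · Tr (B B†)`; summing over `r` and dividing by `D²` is the claim.
-/

open Matrix

namespace Matrix

variable {n 𝕜 : Type*} [Fintype n] [RCLike 𝕜]

lemma re_trace_mul_conjTranspose_self (X : Matrix n n 𝕜) :
    RCLike.re (X * Xᴴ).trace = ∑ i, ∑ j, ‖X i j‖ ^ 2 := by
  simp only [trace, diag, mul_apply, conjTranspose_apply, RCLike.star_def, RCLike.mul_conj,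
    map_sum, ← RCLike.ofReal_pow, RCLike.ofReal_re]

lemma norm_trace_sq_le_card_mul_re_trace_mul_conjTranspose_self (X : Matrix n n 𝕜) :
    ‖X.trace‖ ^ 2 ≤ Fintype.card n * RCLike.re (X * Xᴴ).trace := by
  rw [re_trace_mul_conjTranspose_self]
  calc ‖X.trace‖ ^ 2 ≤ (∑ i, ‖X i i‖) ^ 2 := by
        gcongr; exact norm_sum_le _ _
    _ ≤ Fintype.card n * ∑ i, ‖X i i‖ ^ 2 := sq_sum_le_card_mul_sum_sq
    _ ≤ Fintype.card n * ∑ i, ∑ j, ‖X i j‖ ^ 2 := by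
        gcongr with i
        exact Finset.single_le_sum (f := fun j => ‖X i j‖ ^ 2) (fun _ _ => by positivity)
          (Finset.mem_univ i)

end Matrix

section Pinching

variable {ι n R : Type*} [Fintype ι] [Fintype n] [CommRing R]

def pinching (P : ι → Matrix n n R) (A : Matrix n n R) : Matrix n n R :=
  ∑ k, P k * A * P k

variable {P : ι → Matrix n n R}

lemma trace_pinching [DecidableEq n] (hidem : ∀ k, P k * P k = P k) (hcomp : ∑ k, P k = 1)
    (A : Matrix n n R) : (pinching P A).trace = A.trace := by
  have hcyc : ∀ k, (P k * A * P k).trace = (A * P k).trace := fun k => by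
    rw [trace_mul_cycle, hidem, trace_mul_comm]
  rw [pinching, trace_sum, Finset.sum_congr rfl fun k _ => hcyc k, ← trace_sum,
    ← Finset.mul_sum, hcomp, mul_one]

lemma conjTranspose_pinching [StarRing R] (hherm : ∀ k, (P k)ᴴ = P k) (A : Matrix n n R) :
    (pinching P A)ᴴ = pinching P Aᴴ := by
  simp only [pinching, conjTranspose_sum, conjTranspose_mul, hherm, Matrix.mul_assoc]

lemma trace_pinching_mul_conjTranspose [DecidableEq ι] [StarRing R] (hherm : ∀ k, (P k)ᴴ = P k)
    (horth : ∀ k l, P k * P l = if k = l then P k else 0) (A : Matrix n n R) :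
    (pinching P A * (pinching P A)ᴴ).trace = ∑ k, (A * P k * Aᴴ * P k).trace := by
  have hidem : ∀ k, P k * P k = P k := fun k => by simpa using horth k k
  have hblock : ∀ k l, P k * A * P k * (P l * Aᴴ * P l) =
      if k = l then P k * (A * P k * Aᴴ * P k) else 0 := fun k l => by
    have : P k * A * P k * (P l * Aᴴ * P l) = P k * A * (P k * P l) * Aᴴ * P l := by
      simp only [Matrix.mul_assoc]
    rw [this, horth]
    split_ifs with h
    · subst h; simp only [Matrix.mul_assoc]
    · simp
  have hcyc : ∀ k, (P k * (A * P k * Aᴴ * P k)).trace = (A * P k * Aᴴ * P k).trace := fun k => by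
    rw [trace_mul_comm, Matrix.mul_assoc _ (P k), hidem]
  rw [conjTranspose_pinching hherm, pinching, pinching, Finset.sum_mul_sum]
  simp only [hblock, Finset.sum_ite_eq, Finset.mem_univ, if_true, trace_sum, hcyc]

end Pinching

/-- the universal dynamical inequality `P_S ≥ K` for a complete set of
orthogonal projections and arbitrary Kraus operators. -/
theorem stmt2 (D DS M : ℕ) (P : Fin DS → Matrix (Fin D) (Fin D) ℂ)
    (hherm : ∀ k, (P k)ᴴ = P k)
    (horth : ∀ k l, P k * P l = if k = l then P k else 0)
    (hcomp : ∑ k, P k = 1)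
    (A : Fin M → Matrix (Fin D) (Fin D) ℂ) :
    (1 / (D : ℝ) ^ 2) * ∑ r, ‖(A r).trace‖ ^ 2 ≤
      (1 / (D : ℝ)) * ∑ k, ∑ r, ((A r * P k * (A r)ᴴ * P k).trace).re := by
  have hidem : ∀ k, P k * P k = P k := fun k => by simpa using horth k k
  have hterm : ∀ r, ‖(A r).trace‖ ^ 2 ≤ D * ∑ k, ((A r * P k * (A r)ᴴ * P k).trace).re := by
    intro r
    have := norm_trace_sq_le_card_mul_re_trace_mul_conjTranspose_self (pinching P (A r))
    rwa [trace_pinching hidem hcomp, trace_pinching_mul_conjTranspose hherm horth,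
      Fintype.card_fin, RCLike.re_to_complex, Complex.re_sum] at this
  calc (1 / (D : ℝ) ^ 2) * ∑ r, ‖(A r).trace‖ ^ 2
      ≤ (1 / (D : ℝ) ^ 2) * ∑ r, D * ∑ k, ((A r * P k * (A r)ᴴ * P k).trace).re := by
        gcongr with r; exact hterm r
    _ = (1 / (D : ℝ)) * ∑ k, ∑ r, ((A r * P k * (A r)ᴴ * P k).trace).re := by
        rw [← Finset.mul_sum, Finset.sum_comm, ← mul_assoc, one_div_mul_eq_div, sq,
          div_self_mul_self', one_div]
end

section
/- Let E_1,…,E_D be real numbers with mean μ = (1/D)Σ_n E_n and spectral variance σ² = (1/D)Σ_n (E_n − μ)². Define K(t) = (1/D²)|Σ_n e^{-iE_n t}|². Then for all t with |t| < π/(2σ), K(t) ≥ cos²(σ t). -/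
/-!
For `0 < u ≤ π / 2` the parabola `cos u - sin u / (2u) * (y² - u²)` touches `cos` at `y = ±u`
and lies below it everywhere, because `sin x / x` decreases on `(0, π]`. Averaging this bound over
`y = (E n - μ) t`, whose mean square is `(σ t)²`, gives `(1/D) ∑ cos ((E n - μ) t) ≥ cos (σ t)`.
The left side is the real part of the return amplitude `(1/D) ∑ exp (-i E n t)` up to the phase
`exp (i μ t)`, so its modulus is at least `cos (σ t) ≥ 0`; squaring gives the bound on `K(t)`.
-/

open Real Finset

theorem sin_mul_le_mul_sin {x y : ℝ} (hx : 0 < x) (hxy : x ≤ y) (hy : y ≤ π) :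
    sin y * x ≤ sin x * y := by
  have hy0 : 0 < y := hx.trans_le hxy
  have h := strictConcaveOn_sin_Icc.concaveOn.neg.secant_mono (a := 0) ⟨le_rfl, pi_pos.le⟩
    ⟨hx.le, hxy.trans hy⟩ ⟨hy0.le, hy⟩ hx.ne' hy0.ne' hxy
  simp only [Pi.neg_apply, sin_zero, neg_zero, sub_zero, neg_div, neg_le_neg_iff] at h
  rwa [div_le_div_iff₀ hy0 hx] at h

theorem sin_div_mul_le_sin {u x : ℝ} (hx : 0 ≤ x) (hxu : x ≤ u) (hu : u ≤ π) :
    sin u / u * x ≤ sin x := by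
  rcases hx.eq_or_lt with rfl | hx
  · simp
  rw [div_mul_eq_mul_div, div_le_iff₀ (hx.trans_le hxu)]
  exact sin_mul_le_mul_sin hx hxu hu

theorem sin_le_sin_div_mul {u x : ℝ} (hu : 0 < u) (hu' : u ≤ π / 2) (hux : u ≤ x) :
    sin x ≤ sin u / u * x := by
  rcases le_or_gt x π with hxπ | hπx
  · rw [div_mul_eq_mul_div, le_div_iff₀ hu]
    exact sin_mul_le_mul_sin hu hux hxπ
  · have hu_sin : 2 / π ≤ sin u / u := by
      rw [le_div_iff₀ hu]
      exact mul_le_sin hu.le hu'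
    calc sin x ≤ 2 / π * π := by
          rw [div_mul_cancel₀ _ pi_ne_zero]
          linarith [sin_le_one x]
      _ ≤ sin u / u * x := by gcongr; exact (div_pos two_pos pi_pos).le.trans hu_sin

theorem cos_sub_cos_le_mul_sq_sub_sq {u : ℝ} (hu : 0 < u) (hu' : u ≤ π / 2) (y : ℝ) :
    cos u - cos y ≤ sin u / (2 * u) * (y ^ 2 - u ^ 2) := by
  set ψ : ℝ → ℝ := fun x => cos x + sin u / (2 * u) * x ^ 2
  have hψ' (x : ℝ) : HasDerivAt ψ (sin u / u * x - sin x) x := by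
    refine ((hasDerivAt_cos x).add
      ((hasDerivAt_pow 2 x).const_mul (sin u / (2 * u)))).congr_deriv ?_
    field_simp
    ring
  have hψ_cont : Continuous ψ := by fun_prop
  have hψ_diff : Differentiable ℝ ψ := fun x => (hψ' x).differentiableAt
  have h_anti : AntitoneOn ψ (Set.Icc 0 u) := by
    refine antitoneOn_of_deriv_nonpos (convex_Icc 0 u) hψ_cont.continuousOn
      hψ_diff.differentiableOn fun x hx => ?_
    rw [interior_Icc] at hx
    rw [(hψ' x).deriv, sub_nonpos]
    exact sin_div_mul_le_sin hx.1.le hx.2.le (by linarith [pi_pos])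
  have h_mono : MonotoneOn ψ (Set.Ici u) := by
    refine monotoneOn_of_deriv_nonneg (convex_Ici u) hψ_cont.continuousOn
      hψ_diff.differentiableOn fun x hx => ?_
    rw [interior_Ici] at hx
    rw [(hψ' x).deriv, sub_nonneg]
    exact sin_le_sin_div_mul hu hu' hx.le
  have h_min : ψ u ≤ ψ |y| := by
    rcases le_total |y| u with hyu | huy
    · exact h_anti ⟨abs_nonneg y, hyu⟩ ⟨hu.le, le_rfl⟩ hyu
    · exact h_mono Set.self_mem_Ici huy huy
  simp only [ψ, cos_abs, sq_abs] at h_min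
  linarith

theorem exists_cos_sub_cos_le_mul_sq_sub_sq {u : ℝ} (hu : 0 ≤ u) (hu' : u ≤ π / 2) :
    ∃ c ≥ 0, ∀ y, cos u - cos y ≤ c * (y ^ 2 - u ^ 2) := by
  rcases hu.eq_or_lt with rfl | hu
  · refine ⟨1 / 2, by norm_num, fun y => ?_⟩
    linarith [one_sub_sq_div_two_le_cos (x := y), cos_zero]
  · exact ⟨sin u / (2 * u),
      div_nonneg (sin_nonneg_of_nonneg_of_le_pi hu.le (by linarith [pi_pos])) (by positivity),
      cos_sub_cos_le_mul_sq_sub_sq hu hu'⟩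

theorem card_mul_cos_le_sum_cos {ι : Type*} [Fintype ι] (y : ι → ℝ) {u : ℝ} (hu : 0 ≤ u)
    (hu' : u ≤ π / 2) (hy : ∑ i, y i ^ 2 ≤ Fintype.card ι * u ^ 2) :
    Fintype.card ι * cos u ≤ ∑ i, cos (y i) := by
  obtain ⟨c, hc, hcos⟩ := exists_cos_sub_cos_le_mul_sq_sub_sq hu hu'
  have h := Finset.sum_le_sum fun i (_ : i ∈ univ) => hcos (y i)
  rw [sum_sub_distrib, ← mul_sum, sum_sub_distrib] at h
  simp only [sum_const, card_univ, nsmul_eq_mul] at h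
  nlinarith

theorem sum_cos_sub_le_norm_sum_exp {ι : Type*} [Fintype ι] (x : ι → ℝ) (a : ℝ) :
    ∑ i, cos (x i - a) ≤ ‖∑ i, Complex.exp (-(x i : ℂ) * Complex.I)‖ := by
  set S := ∑ i, Complex.exp (-(x i : ℂ) * Complex.I)
  have h_rot :
      Complex.exp (a * Complex.I) * S = ∑ i, Complex.exp ((a - x i : ℝ) * Complex.I) := by
    rw [mul_sum]
    refine sum_congr rfl fun i _ => ?_
    rw [← Complex.exp_add]
    push_cast
    ring_nf
  calc ∑ i, cos (x i - a) = (Complex.exp (a * Complex.I) * S).re := by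
        simp only [h_rot, Complex.re_sum, Complex.exp_ofReal_mul_I_re, ← cos_neg (_ - a), neg_sub]
    _ ≤ ‖Complex.exp (a * Complex.I) * S‖ := Complex.re_le_norm _
    _ = ‖S‖ := by rw [norm_mul, Complex.norm_exp_ofReal_mul_I, one_mul]

theorem stmt5_general (D : ℕ) (hD : 0 < D) (E : Fin D → ℝ) (μ σ : ℝ)
    (hσ : σ = Real.sqrt ((1 / (D : ℝ)) * ∑ n, (E n - μ) ^ 2))
    (t : ℝ) (ht : |t| < Real.pi / (2 * σ)) :
    Real.cos (σ * t) ^ 2 ≤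
      (1 / (D : ℝ) ^ 2) * ‖∑ n, Complex.exp (-((E n * t : ℝ) : ℂ) * Complex.I)‖ ^ 2 := by
  have hD' : (0 : ℝ) < D := Nat.cast_pos.2 hD
  have hσ_pos : 0 < σ := by
    have := (abs_nonneg t).trans_lt ht
    linarith [(div_pos_iff_of_pos_left pi_pos).1 this]
  have h_var : ∑ n, (E n - μ) ^ 2 = D * σ ^ 2 := by
    rw [hσ, sq_sqrt (by positivity)]
    field_simp
  have hu : σ * |t| < π / 2 := by
    rw [lt_div_iff₀ (by positivity)] at ht
    linarith
  have h_sq : ∑ n, ((E n - μ) * t) ^ 2 = Fintype.card (Fin D) * (σ * |t|) ^ 2 := by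
    simp only [mul_pow, ← sum_mul, h_var, Fintype.card_fin, sq_abs]
    ring
  have h_sum : D * cos (σ * |t|) ≤ ∑ n, cos ((E n - μ) * t) := by
    simpa using card_mul_cos_le_sum_cos _ (by positivity) hu.le h_sq.le
  have h_norm : D * cos (σ * |t|) ≤ ‖∑ n, Complex.exp (-((E n * t : ℝ) : ℂ) * Complex.I)‖ :=
    h_sum.trans (by simpa [sub_mul] using sum_cos_sub_le_norm_sum_exp (fun n => E n * t) (μ * t))
  have h_cos : cos (σ * t) = cos (σ * |t|) := by
    rw [← cos_abs, abs_mul, abs_of_pos hσ_pos]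
  have h_cos_nonneg : 0 ≤ cos (σ * |t|) :=
    cos_nonneg_of_mem_Icc ⟨by linarith [pi_pos, mul_nonneg hσ_pos.le (abs_nonneg t)], hu.le⟩
  rw [h_cos, one_div, inv_mul_eq_div, le_div_iff₀ (by positivity), ← mul_pow, mul_comm]
  exact pow_le_pow_left₀ (by positivity) h_norm 2

/-- Mandelstam–Tamm-type bound on the spectral form factor:
`K(t) ≥ cos²(σ t)` for `|t| < π/(2σ)`, where `σ` is the standard deviation of the
spectrum. -/
theorem stmt5 (D : ℕ) (hD : 0 < D) (E : Fin D → ℝ) (μ σ : ℝ)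
    (hμ : μ = (1 / (D : ℝ)) * ∑ n, E n)
    (hσ : σ = Real.sqrt ((1 / (D : ℝ)) * ∑ n, (E n - μ) ^ 2))
    (t : ℝ) (ht : |t| < Real.pi / (2 * σ)) :
    Real.cos (σ * t) ^ 2 ≤
      (1 / (D : ℝ) ^ 2) * ‖∑ n, Complex.exp (-((E n * t : ℝ) : ℂ) * Complex.I)‖ ^ 2 :=
  stmt5_general D hD E μ σ hσ t ht
end

section
/- Let H be a Hermitian matrix on ℂ^D with orthonormal eigenbasis {|E_n⟩}, and let X be a unitary D×D complex Hadamard matrix (|X_{kn}|² = 1/D for all k,n). Define |k⟩ = Σ_n X_{kn}|E_n⟩. Then for each k and every real t, |⟨k| e^{-iHt} |k⟩|² = (1/D²)|Tr e^{-iHt}|² = K(t). In particular the mean return probability over the basis {|k⟩} equals K(t), saturating the bound P_S(t) ≥ K(t). -/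
theorem norm_sum_star_mul_self_mul_sq {𝕜 ι : Type*} [RCLike 𝕜] [Fintype ι] (x f : ι → 𝕜)
    {c : ℝ} (hx : ∀ n, ‖x n‖ ^ 2 = c) :
    ‖∑ n, star (x n) * x n * f n‖ ^ 2 = c ^ 2 * ‖∑ n, f n‖ ^ 2 := by
  have hweight : ∀ n, star (x n) * x n = (c : 𝕜) := fun n => by
    rw [RCLike.star_def, RCLike.conj_mul, ← hx n]
    norm_cast
  simp_rw [hweight, ← Finset.mul_sum, norm_mul, mul_pow, RCLike.norm_ofReal, sq_abs]

theorem stmt7_general (D : ℕ) (H : Matrix (Fin D) (Fin D) ℂ) (hH : H.IsHermitian)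
    (X : Matrix (Fin D) (Fin D) ℂ)
    (hmod : ∀ k n, ‖X k n‖ ^ 2 = 1 / (D : ℝ)) (k : Fin D) (t : ℝ) :
    ‖∑ n, star (X k n) * X k n *
        Complex.exp (-((hH.eigenvalues n * t : ℝ) : ℂ) * Complex.I)‖ ^ 2 =
      (1 / (D : ℝ) ^ 2) *
        ‖∑ n, Complex.exp (-((hH.eigenvalues n * t : ℝ) : ℂ) * Complex.I)‖ ^ 2 := by
  rw [norm_sum_star_mul_self_mul_sq (X k) _ (hmod k), one_div_pow]

/-- for a complex Hadamard unitary `X` (all entries of modulus `1/√D`),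
each basis state `|k⟩ = Σ_n X_{kn}|E_n⟩` has return probability equal to the
spectral form factor `K(t)`. -/
theorem stmt7 (D : ℕ) (H : Matrix (Fin D) (Fin D) ℂ) (hH : H.IsHermitian)
    (X : Matrix (Fin D) (Fin D) ℂ) (hX : X ∈ Matrix.unitaryGroup (Fin D) ℂ)
    (hmod : ∀ k n, ‖X k n‖ ^ 2 = 1 / (D : ℝ)) (k : Fin D) (t : ℝ) :
    ‖∑ n, star (X k n) * X k n *
        Complex.exp (-((hH.eigenvalues n * t : ℝ) : ℂ) * Complex.I)‖ ^ 2 =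
      (1 / (D : ℝ) ^ 2) *
        ‖∑ n, Complex.exp (-((hH.eigenvalues n * t : ℝ) : ℂ) * Complex.I)‖ ^ 2 :=
  stmt7_general D H hH X hmod k t
end

section
/- Let μ be a finite positive measure on ℝ supported in [E_0, ∞) for some real E_0 (one-sided bounded support), and suppose its Fourier transform Ñ(t) = ∫ e^{-iEt} dμ(E) satisfies |Ñ(t)| ≤ C e^{-a|t|} for all t ∈ ℝ, for some constants C > 0, a > 0. Then μ = 0; that is, no nonzero finite positive measure with support bounded on one side has a Fourier transform decaying exponentially in |t|. -/
open MeasureTheory Filter Set Complex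

local notation "cexp" => Complex.exp
local notation "rexp" => Real.exp

lemma aux_int_exp_abs {b : ℝ} (hb : 0 < b) :
    Integrable fun t : ℝ => Real.exp (-b * |t|) := by
  rw [← integrableOn_univ, ← Set.Iio_union_Ici (a := (0:ℝ)), integrableOn_union,
    integrableOn_Ici_iff_integrableOn_Ioi]
  have hIoi : IntegrableOn (fun t : ℝ => Real.exp (-b * |t|)) (Set.Ioi 0) := by
    refine ((exp_neg_integrableOn_Ioi 0 hb).congr_fun (fun x hx => ?_) measurableSet_Ioi)
    rw [abs_of_pos hx]
  refine ⟨?_, hIoi⟩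
  rw [← (Measure.measurePreserving_neg (volume : Measure ℝ)).integrableOn_comp_preimage
      (Homeomorph.neg ℝ).measurableEmbedding]
  simp only [Function.comp_def, abs_neg, Set.neg_preimage, Set.neg_Iio, neg_zero]
  exact hIoi

/-- Paley–Wiener-type statement: no nonzero finite positive measure with
support bounded on one side has an exponentially decaying Fourier transform. -/
theorem stmt11 (μ : Measure ℝ) [IsFiniteMeasure μ] (E0 : ℝ)
    (hsupp : μ (Set.Iio E0) = 0)
    (C a : ℝ) (hC : 0 < C) (ha : 0 < a)
    (hdecay : ∀ t : ℝ,
      ‖∫ E, Complex.exp (-((E * t : ℝ) : ℂ) * Complex.I) ∂μ‖ ≤ C * Real.exp (-a * |t|)) :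
    μ = 0 := by
  set F : ℝ → ℂ := fun t => ∫ E, Complex.exp (-((E * t : ℝ) : ℂ) * Complex.I) ∂μ with hF
  -- continuity of F
  have hker : ∀ t E : ℝ, Continuous fun p : ℝ => Complex.exp (-((p * t : ℝ) : ℂ) * Complex.I) :=
    fun t _ => Complex.continuous_exp.comp
      (((Complex.continuous_ofReal.comp (continuous_mul_right t)).neg).mul continuous_const)
  have hker2 : ∀ E : ℝ, Continuous fun t : ℝ => Complex.exp (-((E * t : ℝ) : ℂ) * Complex.I) :=
    fun E => Complex.continuous_exp.comp
      (((Complex.continuous_ofReal.comp (continuous_mul_left E)).neg).mul continuous_const)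
  have hFcont : Continuous F := by
    refine continuous_of_dominated (bound := fun _ => (1:ℝ)) (fun t => ?_) (fun t => ?_) ?_ ?_
    · exact (Continuous.aestronglyMeasurable (hker t 0))
    · refine Eventually.of_forall fun E => ?_
      rw [Complex.norm_exp]
      simp
    · exact integrable_const 1
    · exact Eventually.of_forall fun E => hker2 E
  have hFint : Integrable F := by
    refine Integrable.mono' ((aux_int_exp_abs ha).const_mul C) hFcont.aestronglyMeasurable ?_
    exact Eventually.of_forall hdecay
  -- the analytic extension of the (2π-times) density
  have hexpcont : ∀ z : ℂ, Continuous fun t : ℝ => Complex.exp (z * (t:ℂ) * Complex.I) :=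
    fun z => Complex.continuous_exp.comp
      ((continuous_const.mul Complex.continuous_ofReal).mul continuous_const)
  set f : ℂ → ℂ := fun z => ∫ t : ℝ, F t * Complex.exp (z * (t : ℂ) * Complex.I) with hf
  set S : Set ℂ := {z : ℂ | |z.im| < a} with hS
  have hnormexp : ∀ (z : ℂ) (t : ℝ), ‖Complex.exp (z * (t : ℂ) * Complex.I)‖
      = Real.exp (-(z.im * t)) := by
    intro z t
    rw [Complex.norm_exp]
    congr 1
    simp [Complex.mul_re, Complex.mul_im]
  have hbound : ∀ (b : ℝ), b < a → ∀ (z : ℂ), |z.im| ≤ b → ∀ t : ℝ,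
      ‖F t * Complex.exp (z * (t : ℂ) * Complex.I)‖ ≤ C * Real.exp (-(a - b) * |t|) := by
    intro b hb z hz t
    rw [norm_mul, hnormexp]
    calc ‖F t‖ * Real.exp (-(z.im * t))
        ≤ (C * Real.exp (-a * |t|)) * Real.exp (b * |t|) := by
          refine mul_le_mul (hdecay t) ?_ (Real.exp_pos _).le
            (by positivity)
          refine Real.exp_le_exp.2 ?_
          calc -(z.im * t) ≤ |z.im * t| := neg_le_abs _
            _ = |z.im| * |t| := abs_mul _ _
            _ ≤ b * |t| := by
                exact mul_le_mul_of_nonneg_right hz (abs_nonneg _)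
      _ = C * Real.exp (-(a - b) * |t|) := by
          rw [mul_assoc, ← Real.exp_add]; ring_nf
  have hS_open : IsOpen S := by
    have : S = Complex.im ⁻¹' (Set.Ioo (-a) a) := by
      ext z; simp [hS, abs_lt]
    rw [this]
    exact (isOpen_Ioo).preimage Complex.continuous_im
  have hS_conn : IsPreconnected S := by
    refine Convex.isPreconnected ?_
    have : S = Complex.imCLM ⁻¹' (Set.Ioo (-a) a) := by
      ext z; simp [hS, abs_lt]
    rw [this]
    exact (convex_Ioo (-a) a).linear_preimage (Complex.imCLM : ℂ →L[ℝ] ℝ).toLinearMap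
  -- integrability on the strip
  have hint : ∀ z : ℂ, |z.im| < a →
      Integrable (fun t : ℝ => F t * Complex.exp (z * (t : ℂ) * Complex.I)) := by
    intro z hz
    refine Integrable.mono' ((aux_int_exp_abs (b := a - |z.im|) (by linarith)).const_mul C)
      ?_ (Eventually.of_forall (hbound _ hz z le_rfl))
    exact (hFcont.mul (hexpcont z)).aestronglyMeasurable
  -- differentiability on the strip
  have hfd : DifferentiableOn ℂ f S := by
    intro z₀ hz₀
    have hz₀' : |z₀.im| < a := hz₀
    set δ : ℝ := (a - |z₀.im|) / 2 with hδ
    have hδpos : 0 < δ := by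
      rw [hδ]; linarith
    have key := hasDerivAt_integral_of_dominated_loc_of_deriv_le (μ := volume) (𝕜 := ℂ)
      (F := fun z (t : ℝ) => F t * Complex.exp (z * (t:ℂ) * Complex.I))
      (F' := fun z (t : ℝ) =>
        F t * (Complex.exp (z * (t:ℂ) * Complex.I) * ((t:ℂ) * Complex.I)))
      (x₀ := z₀) (s := Metric.ball z₀ δ)
      (bound := fun t : ℝ => C * ((2/δ) * Real.exp (-(δ/2) * |t|)))
      (Metric.ball_mem_nhds z₀ hδpos)
      (Eventually.of_forall fun z => (hFcont.mul (hexpcont z)).aestronglyMeasurable)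
      (hint z₀ hz₀')
      ((hFcont.mul ((hexpcont z₀).mul
        (Complex.continuous_ofReal.mul continuous_const))).aestronglyMeasurable)
      ?_
      (((aux_int_exp_abs (by positivity : (0:ℝ) < δ/2)).const_mul (2/δ)).const_mul C)
      ?_
    · exact (key.2).differentiableAt.differentiableWithinAt
    · -- the uniform bound on the derivative
      refine Eventually.of_forall fun t => fun z hzb => ?_
      have him : |z.im| ≤ a - δ := by
        have h1 : |z.im - z₀.im| ≤ ‖z - z₀‖ := by
          simpa using Complex.abs_im_le_norm (z - z₀)
        have h2 : ‖z - z₀‖ < δ := by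
          rw [← Complex.dist_eq]
          exact Metric.mem_ball.1 hzb
        have h3 : |z.im| ≤ |z₀.im| + |z.im - z₀.im| := by
          have := abs_sub_abs_le_abs_sub z.im z₀.im
          have := abs_add_le z₀.im (z.im - z₀.im)
          calc |z.im| = |z₀.im + (z.im - z₀.im)| := by ring_nf
            _ ≤ |z₀.im| + |z.im - z₀.im| := abs_add_le _ _
        have : |z₀.im| = a - 2*δ := by rw [hδ]; ring
        linarith
      have h1 : ‖((t:ℂ) * Complex.I)‖ = |t| := by
        simp [map_mul]
      calc ‖F t * (Complex.exp (z * (t:ℂ) * Complex.I) * ((t:ℂ) * Complex.I))‖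
          = ‖F t‖ * (Real.exp (-(z.im * t)) * |t|) := by
            rw [norm_mul, norm_mul, h1, hnormexp]
        _ ≤ (C * Real.exp (-a * |t|)) *
            (Real.exp ((a - δ) * |t|) * ((2/δ) * Real.exp ((δ/2) * |t|))) := by
            refine mul_le_mul (hdecay t) ?_ (by positivity) (by positivity)
            refine mul_le_mul ?_ ?_ (abs_nonneg _) (by positivity)
            · refine Real.exp_le_exp.2 ?_
              calc -(z.im * t) ≤ |z.im * t| := neg_le_abs _
                _ = |z.im| * |t| := abs_mul _ _
                _ ≤ (a - δ) * |t| := mul_le_mul_of_nonneg_right him (abs_nonneg _)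
            · calc |t| = (2/δ) * ((δ/2) * |t|) := by field_simp
                _ ≤ (2/δ) * Real.exp ((δ/2) * |t|) := by
                    refine mul_le_mul_of_nonneg_left ?_ (by positivity)
                    have := Real.add_one_le_exp ((δ/2) * |t|)
                    linarith
        _ = C * ((2/δ) * (Real.exp (-a * |t|) * (Real.exp ((a - δ) * |t|) *
              Real.exp ((δ/2) * |t|)))) := by ring
        _ = C * ((2/δ) * Real.exp (-(δ/2) * |t|)) := by
            rw [← Real.exp_add, ← Real.exp_add]
            congr 2
            ring
    · -- differentiability of the integrand
      refine Eventually.of_forall fun t => fun z hz => ?_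
      have h := (((hasDerivAt_id z).mul_const ((t:ℂ) * Complex.I)).cexp).const_mul (F t)
      simpa [mul_assoc] using h
  -- f vanishes on reals below E0
  have hzero : ∀ x : ℝ, x < E0 → f (x : ℂ) = 0 := by
    intro x hx
    set c : ℝ := (E0 - x)^2 with hc
    have hcpos : 0 < c := by
      rw [hc]
      have h9 : 0 < E0 - x := by linarith
      positivity
    set M : ℝ := (μ Set.univ).toReal with hM
    set Φ : ℝ → ℂ := fun ε => ∫ t : ℝ, F t * Complex.exp ((x:ℂ) * (t:ℂ) * Complex.I) *
      Complex.exp (-(ε:ℂ) * (t:ℂ)^2) with hΦ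
    have hae : ∀ᵐ E ∂μ, E0 ≤ E := by
      rw [ae_iff]
      have hset : {E : ℝ | ¬ E0 ≤ E} = Set.Iio E0 := by ext E; simp [not_le]
      rw [hset]; exact hsupp
    -- Fubini + Gaussian integral
    have hswap : ∀ ε : ℝ, 0 < ε → Φ ε =
        ((Real.pi : ℂ)/(ε : ℂ))^(1/2 : ℂ) *
          ∫ E, Complex.exp (-((x:ℂ) - (E:ℂ))^2 / (4 * (ε:ℂ))) ∂μ := by
      intro ε hε
      have hprod : Integrable (Function.uncurry fun (t E : ℝ) =>
          Complex.exp (-((E * t : ℝ) : ℂ) * Complex.I) *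
            (Complex.exp ((x:ℂ) * (t:ℂ) * Complex.I) * Complex.exp (-(ε:ℂ) * (t:ℂ)^2)))
          (volume.prod μ) := by
        have gbd : Integrable (fun p : ℝ × ℝ => Real.exp (-ε * p.1^2) * 1) (volume.prod μ) :=
          (integrable_exp_neg_mul_sq hε).mul_prod (integrable_const 1)
        have hcont : Continuous (fun p : ℝ × ℝ =>
            Complex.exp (-((p.2 * p.1 : ℝ) : ℂ) * Complex.I) *
              (Complex.exp ((x:ℂ) * (p.1:ℂ) * Complex.I) *
                Complex.exp (-(ε:ℂ) * (p.1:ℂ)^2))) := by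
          refine Continuous.mul ?_ (Continuous.mul ?_ ?_)
          · exact Complex.continuous_exp.comp
              (((Complex.continuous_ofReal.comp (continuous_snd.mul continuous_fst)).neg).mul
                continuous_const)
          · exact Complex.continuous_exp.comp
              ((continuous_const.mul (Complex.continuous_ofReal.comp continuous_fst)).mul
                continuous_const)
          · exact Complex.continuous_exp.comp
              (continuous_const.mul ((Complex.continuous_ofReal.comp continuous_fst).pow 2))
        refine Integrable.mono' gbd hcont.aestronglyMeasurable ?_
        refine Eventually.of_forall fun p => ?_
        simp only [Function.uncurry]
        rw [norm_mul, norm_mul]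
        have e1 : ‖Complex.exp (-((p.2 * p.1 : ℝ) : ℂ) * Complex.I)‖ = 1 := by
          rw [Complex.norm_exp]; simp
        have e2 : ‖Complex.exp ((x:ℂ) * (p.1:ℂ) * Complex.I)‖ = 1 := by
          rw [hnormexp (x:ℂ) p.1]; simp
        have e3 : ‖Complex.exp (-(ε:ℂ) * (p.1:ℂ)^2)‖ = Real.exp (-ε * p.1^2) := by
          rw [show (-(ε:ℂ) * (p.1:ℂ)^2) = ((-ε * p.1^2 : ℝ) : ℂ) by push_cast; ring,
            Complex.norm_exp, Complex.ofReal_re]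
        rw [e1, e2, e3]
        simp
      calc Φ ε = ∫ t : ℝ, ∫ E, Complex.exp (-((E * t : ℝ) : ℂ) * Complex.I) *
            (Complex.exp ((x:ℂ) * (t:ℂ) * Complex.I) * Complex.exp (-(ε:ℂ) * (t:ℂ)^2)) ∂μ := by
            refine integral_congr_ae (Eventually.of_forall fun t => ?_)
            show F t * Complex.exp ((x:ℂ) * (t:ℂ) * Complex.I) *
              Complex.exp (-(ε:ℂ) * (t:ℂ)^2) = _
            rw [mul_assoc]
            exact (integral_mul_const _ _).symm
        _ = ∫ E, (∫ t : ℝ, Complex.exp (-((E * t : ℝ) : ℂ) * Complex.I) *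
            (Complex.exp ((x:ℂ) * (t:ℂ) * Complex.I) * Complex.exp (-(ε:ℂ) * (t:ℂ)^2))) ∂μ :=
            integral_integral_swap hprod
        _ = ∫ E, ((Real.pi : ℂ)/(ε : ℂ))^(1/2 : ℂ) *
              Complex.exp (-((x:ℂ) - (E:ℂ))^2 / (4 * (ε:ℂ))) ∂μ := by
            refine integral_congr_ae (Eventually.of_forall fun E => ?_)
            have e2 : ∀ t : ℝ, Complex.exp (-((E * t : ℝ) : ℂ) * Complex.I) *
                (Complex.exp ((x:ℂ) * (t:ℂ) * Complex.I) * Complex.exp (-(ε:ℂ) * (t:ℂ)^2)) =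
                Complex.exp (Complex.I * ((x:ℂ) - (E:ℂ)) * (t:ℂ)) *
                  Complex.exp (-(ε:ℂ) * (t:ℂ)^2) := by
              intro t
              rw [← mul_assoc, ← Complex.exp_add]
              congr 2
              push_cast
              ring
            refine Eq.trans (integral_congr_ae (Eventually.of_forall e2)) ?_
            exact fourierIntegral_gaussian (by simpa using hε) ((x:ℂ) - (E:ℂ))
        _ = ((Real.pi : ℂ)/(ε : ℂ))^(1/2 : ℂ) *
              ∫ E, Complex.exp (-((x:ℂ) - (E:ℂ))^2 / (4 * (ε:ℂ))) ∂μ := integral_const_mul _ _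
    -- norm bound
    have hnormΦ : ∀ ε : ℝ, 0 < ε →
        ‖Φ ε‖ ≤ (Real.pi/ε)^(1/2 : ℝ) * (Real.exp (-c/(4*ε)) * M) := by
      intro ε hε
      rw [hswap ε hε, norm_mul]
      have hpos : 0 < Real.pi/ε := div_pos Real.pi_pos hε
      have h1 : ‖((Real.pi:ℂ)/(ε:ℂ))^(1/2:ℂ)‖ = (Real.pi/ε)^(1/2 : ℝ) := by
        rw [show ((Real.pi:ℂ)/(ε:ℂ)) = ((Real.pi/ε : ℝ) : ℂ) by push_cast; ring,
          Complex.norm_cpow_eq_rpow_re_of_pos hpos]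
        norm_num
      rw [h1]
      refine mul_le_mul_of_nonneg_left ?_ (Real.rpow_nonneg hpos.le _)
      refine norm_integral_le_of_norm_le_const ?_
      refine hae.mono fun E hE => ?_
      rw [show (-((x:ℂ) - (E:ℂ))^2 / (4 * (ε:ℂ))) = ((-(x - E)^2/(4*ε) : ℝ) : ℂ) by
        push_cast; ring, Complex.norm_exp, Complex.ofReal_re]
      refine Real.exp_le_exp.2 ?_
      have h2 : c ≤ (x - E)^2 := by
        have hxE : E0 - x ≤ E - x := by linarith
        have h0 : 0 ≤ E0 - x := by linarith
        calc c = (E0 - x)^2 := hc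
          _ ≤ (E - x)^2 := by nlinarith
          _ = (x - E)^2 := by ring
      have h4 : (0:ℝ) < 4*ε := by linarith
      exact (div_le_div_iff_of_pos_right h4).2 (by linarith)
    -- limit along ε = 1/(n+1)
    have hΦlim : Filter.Tendsto (fun n : ℕ => Φ (1/(n+1))) atTop (nhds (f (x:ℂ))) := by
      have : f (x:ℂ) = ∫ t : ℝ, F t * Complex.exp ((x:ℂ) * (t:ℂ) * Complex.I) := rfl
      rw [this]
      refine tendsto_integral_of_dominated_convergence
        (bound := fun t => C * Real.exp (-a * |t|)) ?_ ?_ ?_ ?_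
      · intro n
        exact ((hFcont.mul (hexpcont (x:ℂ))).mul (Complex.continuous_exp.comp
          (continuous_const.mul ((Complex.continuous_ofReal).pow 2)))).aestronglyMeasurable
      · exact (aux_int_exp_abs ha).const_mul C
      · intro n
        refine Eventually.of_forall fun t => ?_
        rw [norm_mul, norm_mul, hnormexp (x:ℂ) t]
        have e3 : ‖Complex.exp (-((1/((n:ℕ)+1) : ℝ):ℂ) * (t:ℂ)^2)‖ ≤ 1 := by
          rw [show (-((1/((n:ℕ)+1) : ℝ):ℂ) * (t:ℂ)^2) = ((-((1/((n:ℕ)+1):ℝ) * t^2) : ℝ) : ℂ) by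
            push_cast; ring, Complex.norm_exp, Complex.ofReal_re]
          rw [Real.exp_le_one_iff]
          have : (0:ℝ) ≤ (1/((n:ℕ)+1):ℝ) * t^2 := by positivity
          linarith
        have e2 : Real.exp (-((x:ℂ).im * t)) = 1 := by simp
        rw [e2, mul_one]
        calc ‖F t‖ * ‖Complex.exp (-((1/((n:ℕ)+1) : ℝ):ℂ) * (t:ℂ)^2)‖
            ≤ ‖F t‖ * 1 := mul_le_mul_of_nonneg_left e3 (norm_nonneg _)
          _ = ‖F t‖ := mul_one _
          _ ≤ C * Real.exp (-a * |t|) := hdecay t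
      · refine Eventually.of_forall fun t => ?_
        have h0 : Filter.Tendsto (fun n : ℕ => (1/((n:ℝ)+1))) atTop (nhds 0) :=
          tendsto_one_div_add_atTop_nhds_zero_nat
        have h1 : Filter.Tendsto (fun n : ℕ => -((1/((n:ℝ)+1) : ℝ):ℂ) * (t:ℂ)^2) atTop
            (nhds 0) := by
          have h2 := ((Complex.continuous_ofReal.tendsto 0).comp h0).neg.mul_const ((t:ℂ)^2)
          simpa using h2
        have h3 := (Complex.continuous_exp.tendsto 0).comp h1
        rw [Complex.exp_zero] at h3
        have h4 := (tendsto_const_nhds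
          (x := F t * Complex.exp ((x:ℂ) * (t:ℂ) * Complex.I)) (f := atTop (α := ℕ))).mul h3
        simpa using h4
    -- squeeze to zero
    have hΦ0 : Filter.Tendsto (fun n : ℕ => Φ (1/(n+1))) atTop (nhds 0) := by
      rw [tendsto_zero_iff_norm_tendsto_zero]
      have hg : Filter.Tendsto
          (fun u : ℝ => (Real.pi * u)^(1/2:ℝ) * (Real.exp (-(c/4) * u) * M)) atTop (nhds 0) := by
        have h1 := tendsto_rpow_mul_exp_neg_mul_atTop_nhds_zero (1/2) (c/4) (by positivity)
        have h2 := (h1.const_mul (Real.pi^(1/2:ℝ))).mul_const M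
        rw [mul_zero, zero_mul] at h2
        refine h2.congr' ?_
        filter_upwards [eventually_ge_atTop (0:ℝ)] with u hu
        rw [Real.mul_rpow Real.pi_pos.le hu]
        ring
      have hu : Filter.Tendsto (fun n : ℕ => ((n:ℝ)+1)) atTop atTop :=
        tendsto_atTop_add_const_right atTop 1 tendsto_natCast_atTop_atTop
      have hcomp := hg.comp hu
      set bnd : ℕ → ℝ := fun n => (Real.pi/(1/((n:ℝ)+1)))^(1/2:ℝ) *
        (Real.exp (-c/(4*(1/((n:ℝ)+1)))) * M) with hbnd
      have hble : ∀ n : ℕ, ‖Φ (1/((n:ℝ)+1))‖ ≤ bnd n := fun n =>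
        hnormΦ _ (by positivity)
      have hbtend : Filter.Tendsto bnd atTop (nhds 0) := by
        refine hcomp.congr fun n => ?_
        simp only [Function.comp, hbnd]
        rw [show Real.pi / (1/((n:ℝ)+1)) = Real.pi * ((n:ℝ)+1) by field_simp,
          show -c/(4*(1/((n:ℝ)+1))) = -(c/4)*((n:ℝ)+1) by field_simp]
      exact squeeze_zero (fun n => norm_nonneg _) hble hbtend
    exact tendsto_nhds_unique hΦlim hΦ0
  -- identity theorem
  have hEq : Set.EqOn f 0 S := by
    have hanal : AnalyticOnNhd ℂ f S := hfd.analyticOnNhd hS_open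
    have hz₀ : ((E0 - 1 : ℝ) : ℂ) ∈ S := by simp [hS, ha]
    refine hanal.eqOn_zero_of_preconnected_of_frequently_eq_zero hS_conn hz₀ ?_
    have hseq : Filter.Tendsto (fun n : ℕ => ((E0 - 1 - 1/(n+1) : ℝ) : ℂ)) atTop
        (nhdsWithin ((E0 - 1 : ℝ) : ℂ) {((E0 - 1 : ℝ) : ℂ)}ᶜ) := by
      rw [tendsto_nhdsWithin_iff]
      constructor
      · have : Filter.Tendsto (fun n : ℕ => (E0 - 1 - 1/(n+1) : ℝ)) atTop (nhds (E0 - 1)) := by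
          have := tendsto_one_div_add_atTop_nhds_zero_nat (𝕜 := ℝ)
          have h2 := (tendsto_const_nhds (x := (E0 - 1 : ℝ)) (f := atTop (α := ℕ))).sub this
          simpa using h2
        exact (Complex.continuous_ofReal.continuousAt.tendsto).comp this
      · refine Eventually.of_forall fun n => ?_
        simp only [Set.mem_compl_iff, Set.mem_singleton_iff]
        intro h
        have := Complex.ofReal_injective h
        have hpos : 0 < 1/((n:ℝ)+1) := by positivity
        linarith
    exact hseq.frequently (Frequently.of_forall fun n => hzero _
      (by have hpos : 0 < 1/((n:ℝ)+1) := by positivity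
          linarith))
  have hreal : ∀ x : ℝ, f (x : ℂ) = 0 := fun x => hEq (by simp [hS, ha])
  -- Fourier transform of F vanishes
  have h𝓕 : FourierTransform.fourier F = 0 := by
    funext w
    rw [Real.fourier_real_eq_integral_exp_smul]
    have : ∀ t : ℝ, Complex.exp (((-2 * Real.pi * t * w : ℝ)) * Complex.I) • F t
        = F t * Complex.exp (((-2 * Real.pi * w : ℝ) : ℂ) * (t : ℂ) * Complex.I) := by
      intro t
      rw [smul_eq_mul, mul_comm]
      congr 2
      push_cast
      ring
    simp_rw [this]
    exact hreal _
  have hF0 : F = 0 := by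
    have hinv := hFcont.fourierInv_fourier_eq hFint (by rw [h𝓕]; exact integrable_zero _ _ _)
    rw [h𝓕] at hinv
    rw [← hinv]
    funext w
    simp [Real.fourierInv_eq]
  have hμuniv : (μ Set.univ).toReal = 0 := by
    have h0 : F 0 = 0 := by rw [hF0]; rfl
    rw [hF] at h0
    simp only [mul_zero, Complex.ofReal_zero, neg_zero, zero_mul, Complex.exp_zero] at h0
    rw [integral_const] at h0
    simpa [measureReal_def] using h0
  have : μ Set.univ = 0 := by
    have := measure_ne_top μ Set.univ
    exact (ENNReal.toReal_eq_zero_iff _).1 hμuniv |>.resolve_right this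
  exact Measure.measure_univ_eq_zero.1 this
end

section
/- Let f : ℝ → ℝ be even (f(t) = f(−t)), nonnegative, nonincreasing on [0,∞), convex on (0,∞), and integrable with f(t) → 0 as t → ∞. Then the Fourier transform F(E) = ∫ f(t) e^{-iEt} dt is real and nonnegative for all E ∈ ℝ. -/
/-!
By evenness the transform is real and equals `2 ∫₀^∞ f t * cos (|E| * t) dt`, and rescaling
reduces to `|E| = 1`. On a period `[2πk, 2π(k + 1)]`, folding the interval twice about its
midpoints turns `∫ f t * cos t` into `∫₀^{π/2} cos x * (F x + F (2π - x) - F (π - x) - F (π + x))`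
with `F = f (· + 2πk)`. The bracket is nonnegative by convexity: `π - x` and `π + x` lie between
`x` and `2π - x` and have the same sum. Summing over periods and letting their number tend to
infinity gives the claim.
-/

open MeasureTheory Set Real intervalIntegral ComplexConjugate

theorem ConvexOn.map_add_map_sub_le {s : Set ℝ} {f : ℝ → ℝ} (hf : ConvexOn ℝ s f)
    {a b x : ℝ} (ha : a ∈ s) (hb : b ∈ s) (hx : x ∈ Icc a b) :
    f x + f (a + b - x) ≤ f a + f b := by
  obtain ⟨hax, hxb⟩ := hx
  rcases hax.eq_or_lt with rfl | hax
  · simp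
  have hd : 0 < b - a := by linarith
  have hμ : 0 ≤ (b - x) / (b - a) := div_nonneg (by linarith) hd.le
  have hν : 0 ≤ (x - a) / (b - a) := div_nonneg (by linarith) hd.le
  have hsum : (b - x) / (b - a) + (x - a) / (b - a) = 1 := by field_simp; ring
  have h₁ := hf.2 ha hb hμ hν hsum
  have h₂ := hf.2 ha hb hν hμ (by rwa [add_comm])
  simp only [smul_eq_mul] at h₁ h₂
  have e₁ : (b - x) / (b - a) * a + (x - a) / (b - a) * b = x := by field_simp; ring
  have e₂ : (x - a) / (b - a) * a + (b - x) / (b - a) * b = a + b - x := by field_simp; ring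
  rw [e₁] at h₁
  rw [e₂] at h₂
  linear_combination h₁ + h₂ + (f a + f b) * hsum

theorem mem_uIcc_zero_two_mul (c : ℝ) : c ∈ uIcc 0 (2 * c) := by
  rw [mem_uIcc]
  rcases le_total 0 c with h | h
  · exact Or.inl ⟨h, by linarith⟩
  · exact Or.inr ⟨by linarith, h⟩

section Fold

variable {g : ℝ → ℝ} {c : ℝ}

theorem IntervalIntegrable.left_half (hg : IntervalIntegrable g volume 0 (2 * c)) :
    IntervalIntegrable g volume 0 c :=
  hg.mono_set (uIcc_subset_uIcc left_mem_uIcc (mem_uIcc_zero_two_mul c))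

theorem IntervalIntegrable.comp_two_mul_sub (hg : IntervalIntegrable g volume 0 (2 * c)) :
    IntervalIntegrable (fun x => g (2 * c - x)) volume 0 c := by
  have hright : IntervalIntegrable g volume (2 * c) c :=
    hg.mono_set (uIcc_subset_uIcc right_mem_uIcc (mem_uIcc_zero_two_mul c))
  simpa [two_mul] using hright.comp_sub_left (2 * c)

theorem intervalIntegral.integral_zero_two_mul (hg : IntervalIntegrable g volume 0 (2 * c)) :
    ∫ x in 0..2 * c, g x = ∫ x in 0..c, (g x + g (2 * c - x)) := by
  have hright : IntervalIntegrable g volume c (2 * c) :=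
    hg.mono_set (uIcc_subset_uIcc (mem_uIcc_zero_two_mul c) right_mem_uIcc)
  rw [← integral_add_adjacent_intervals hg.left_half hright,
    integral_add hg.left_half hg.comp_two_mul_sub, integral_comp_sub_left, sub_zero, two_mul,
    add_sub_cancel_right]

end Fold

theorem integral_zero_two_pi_mul_cos_nonneg {F : ℝ → ℝ} (hF : ConvexOn ℝ (Ioc 0 (2 * π)) F)
    (hint : IntervalIntegrable F volume 0 (2 * π)) : 0 ≤ ∫ x in 0..2 * π, F x * cos x := by
  set g : ℝ → ℝ := fun x => F x * cos x
  have hg : IntervalIntegrable g volume 0 (2 * π) :=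
    hint.mul_continuousOn continuous_cos.continuousOn
  have hπ : 2 * (π / 2) = π := by ring
  have hg₁ : IntervalIntegrable (fun x => g x + g (2 * π - x)) volume 0 (2 * (π / 2)) := by
    rw [hπ]
    exact hg.left_half.add hg.comp_two_mul_sub
  have hfold := integral_zero_two_mul hg₁
  rw [hπ] at hfold
  rw [integral_zero_two_mul hg, hfold, integral_of_le (by positivity)]
  refine setIntegral_nonneg measurableSet_Ioc fun x ⟨hx₀, hx⟩ => ?_
  have hreflect : 2 * π - (π - x) = x + π := by ring
  have hfour : F (π - x) + F (x + π) ≤ F x + F (2 * π - x) := by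
    have := hF.map_add_map_sub_le (a := x) (b := 2 * π - x) (x := π - x)
      ⟨hx₀, by linarith [pi_pos]⟩ ⟨by linarith, by linarith⟩ ⟨by linarith, by linarith⟩
    rwa [show x + (2 * π - x) - (π - x) = x + π by ring] at this
  have hcos : 0 ≤ cos x := cos_nonneg_of_mem_Icc ⟨by linarith [pi_pos], hx⟩
  simp only [g, hreflect, cos_two_pi_sub, cos_pi_sub, cos_add_pi]
  linear_combination mul_nonneg hcos (sub_nonneg.2 hfour)

theorem MeasureTheory.IntegrableOn.intervalIntegrable_of_Ioi {f : ℝ → ℝ} {a b c : ℝ}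
    (hf : IntegrableOn f (Ioi a)) (hab : a ≤ b) (hbc : b ≤ c) : IntervalIntegrable f volume b c :=
  (intervalIntegrable_iff_integrableOn_Ioc_of_le hbc).2
    (hf.mono_set fun _ hx => lt_of_le_of_lt hab hx.1)

theorem integral_mul_cos_period_nonneg {f : ℝ → ℝ} (hf : ConvexOn ℝ (Ioi 0) f)
    (hint : IntegrableOn f (Ioi 0)) (k : ℕ) :
    0 ≤ ∫ t in k * (2 * π)..(k + 1) * (2 * π), f t * cos t := by
  rw [show ((k : ℝ) + 1) * (2 * π) = k * (2 * π) + 2 * π by ring]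
  set c : ℝ := k * (2 * π)
  have hc : 0 ≤ c := by positivity
  have hconv : ConvexOn ℝ (Ioc 0 (2 * π)) fun x => f (x + c) :=
    (hf.translate_left c).subset
      (fun x hx => by simp only [mem_preimage, mem_Ioi]; linarith [hx.1]) (convex_Ioc 0 (2 * π))
  have hI : IntervalIntegrable f volume c (c + 2 * π) :=
    hint.intervalIntegrable_of_Ioi hc (by linarith [pi_pos])
  have hshift : ∫ t in c..c + 2 * π, f t * cos t = ∫ x in 0..2 * π, f (x + c) * cos x :=
    calc ∫ t in c..c + 2 * π, f t * cos t
        = ∫ x in 0..2 * π, f (x + c) * cos (x + c) := by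
          rw [integral_comp_add_right (fun t => f t * cos t), zero_add, add_comm]
      _ = ∫ x in 0..2 * π, f (x + c) * cos x := by simp only [c, cos_add_nat_mul_two_pi]
  rw [hshift]
  exact integral_zero_two_pi_mul_cos_nonneg hconv (by simpa using hI.comp_add_right c)

theorem integral_Ioi_mul_cos_nonneg {f : ℝ → ℝ} (hf : ConvexOn ℝ (Ioi 0) f)
    (hint : IntegrableOn f (Ioi 0)) : 0 ≤ ∫ t in Ioi 0, f t * cos t := by
  have hg : IntegrableOn (fun t => f t * cos t) (Ioi 0) :=
    hint.mul_bdd continuous_cos.aestronglyMeasurable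
      (ae_of_all _ fun t => by simpa using abs_cos_le_one t)
  have hpartial (n : ℕ) : 0 ≤ ∫ t in 0..n * (2 * π), f t * cos t := by
    have hsum := sum_integral_adjacent_intervals (μ := volume) (f := fun t => f t * cos t)
      (a := fun k : ℕ => k * (2 * π)) (n := n)
      fun k _ => hg.intervalIntegrable_of_Ioi (by positivity) (by gcongr; linarith)
    rw [Nat.cast_zero, zero_mul] at hsum
    rw [← hsum]
    exact Finset.sum_nonneg fun k _ => by exact_mod_cast integral_mul_cos_period_nonneg hf hint k
  exact ge_of_tendsto' (intervalIntegral_tendsto_integral_Ioi 0 hg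
    (tendsto_natCast_atTop_atTop.atTop_mul_const two_pi_pos)) hpartial

theorem ConvexOn.comp_const_mul_Ioi {f : ℝ → ℝ} (hf : ConvexOn ℝ (Ioi 0) f) {c : ℝ}
    (hc : 0 < c) : ConvexOn ℝ (Ioi 0) fun x => f (c * x) :=
  (hf.comp_linearMap (LinearMap.mulLeft ℝ c)).subset (fun _ hx => mul_pos hc hx) (convex_Ioi 0)

theorem integral_Ioi_mul_cos_mul_nonneg {f : ℝ → ℝ} (hf : ConvexOn ℝ (Ioi 0) f)
    (hint : IntegrableOn f (Ioi 0)) {E : ℝ} (hE : 0 < E) :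
    0 ≤ ∫ t in Ioi 0, f t * cos (E * t) := by
  have hscale := integral_comp_mul_left_Ioi (fun x => f (E⁻¹ * x) * cos x) 0 hE
  simp only [inv_mul_cancel_left₀ hE.ne', mul_zero, smul_eq_mul] at hscale
  rw [hscale]
  refine mul_nonneg (inv_nonneg.2 hE.le)
    (integral_Ioi_mul_cos_nonneg (hf.comp_const_mul_Ioi (inv_pos.2 hE)) ?_)
  rw [integrableOn_Ioi_comp_mul_left_iff f 0 (inv_pos.2 hE), mul_zero]
  exact hint

theorem Function.Even.apply_abs {f : ℝ → ℝ} (hf : Function.Even f) (x : ℝ) : f |x| = f x := by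
  rcases abs_choice x with h | h <;> rw [h]
  exact hf x

theorem integral_mul_cos_mul_eq_two_mul_integral_Ioi {f : ℝ → ℝ} (hf : Function.Even f)
    (E : ℝ) : ∫ t, f t * cos (E * t) = 2 * ∫ t in Ioi 0, f t * cos (|E| * t) := by
  rw [← integral_comp_abs]
  simp only [hf.apply_abs, ← abs_mul, cos_abs]

theorem integral_mul_exp_neg_mul_I_eq_ofReal {f : ℝ → ℝ} (hf : Function.Even f)
    (hint : Integrable f) (E : ℝ) :
    ∫ t, (f t : ℂ) * Complex.exp (-((E * t : ℝ) : ℂ) * Complex.I) =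
      ((∫ t, f t * cos (E * t) : ℝ) : ℂ) := by
  set F := ∫ t, (f t : ℂ) * Complex.exp (-((E * t : ℝ) : ℂ) * Complex.I)
  have hint' : Integrable fun t => (f t : ℂ) * Complex.exp (-((E * t : ℝ) : ℂ) * Complex.I) :=
    hint.ofReal.mul_bdd (by fun_prop) (ae_of_all _ fun t => by
      rw [← Complex.ofReal_neg, Complex.norm_exp_ofReal_mul_I])
  have hconj : conj F = F := by
    rw [← integral_conj, ← integral_neg_eq_self]
    congr 1
    ext t
    simp [hf t, ← Complex.exp_conj]
  have hre : F.re = ∫ t, f t * cos (E * t) := by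
    rw [show F.re = RCLike.re F from rfl, ← integral_re hint']
    congr 1
    ext t
    rw [← Complex.ofReal_neg, RCLike.re_to_complex, Complex.re_ofReal_mul,
      Complex.exp_ofReal_mul_I_re, cos_neg]
  rw [← hre]
  exact (Complex.conj_eq_iff_re.1 hconj).symm

theorem stmt13_general (f : ℝ → ℝ) (heven : ∀ t, f (-t) = f t) (hnonneg : ∀ t, 0 ≤ f t)
    (hconv : ConvexOn ℝ (Set.Ioi 0) f)
    (hint : MeasureTheory.Integrable f) (E : ℝ) :
    ∃ r : ℝ, 0 ≤ r ∧
      (∫ t : ℝ, ((f t : ℝ) : ℂ) * Complex.exp (-((E * t : ℝ) : ℂ) * Complex.I)) = (r : ℂ) := by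
  refine ⟨_, ?_, integral_mul_exp_neg_mul_I_eq_ofReal heven hint E⟩
  rw [integral_mul_cos_mul_eq_two_mul_integral_Ioi heven]
  refine mul_nonneg zero_le_two ?_
  rcases (abs_nonneg E).eq_or_lt with hE | hE
  · simpa [← hE] using setIntegral_nonneg measurableSet_Ioi fun t _ => hnonneg t
  · exact integral_Ioi_mul_cos_mul_nonneg hconv hint.integrableOn hE

/-- Pólya's criterion: an even, nonnegative, nonincreasing-on-`[0,∞)`,
convex-on-`(0,∞)`, integrable function tending to `0` at infinity has a real nonnegative
Fourier transform. -/
theorem stmt13 (f : ℝ → ℝ) (heven : ∀ t, f (-t) = f t) (hnonneg : ∀ t, 0 ≤ f t)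
    (hmono : AntitoneOn f (Set.Ici 0)) (hconv : ConvexOn ℝ (Set.Ioi 0) f)
    (hint : MeasureTheory.Integrable f)
    (hlim : Filter.Tendsto f Filter.atTop (nhds 0)) (E : ℝ) :
    ∃ r : ℝ, 0 ≤ r ∧
      (∫ t : ℝ, ((f t : ℝ) : ℂ) * Complex.exp (-((E * t : ℝ) : ℂ) * Complex.I)) = (r : ℂ) :=
  stmt13_general f heven hnonneg hconv hint E
end

section
/- Let {Π_k}_{k=1}^{D_S} be a complete set of orthonormal Hermitian projections on ℂ^{D_S} ⊗ ℂ^{D_E} each of rank D_E, and U unitary with (1/D²)|Tr U|² > 1/D_S for D = D_S D_E. Then there exists k such that (1/D_E) Tr[U Π_k U† Π_k] > 1/D_S; i.e., not all coarse-grained states can be scrambled to the uniform value 1/D_S. -/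
/-!
Write `Tr U = ∑ₖ Tr(U Πₖ)`. Since `Πₖ` is an orthogonal projection, `Tr(U Πₖ) = ⟨Πₖ, Πₖ U Πₖ⟩`
in the Hilbert–Schmidt inner product, so Cauchy–Schwarz gives
`|Tr(U Πₖ)|² ≤ Tr Πₖ · Tr(U Πₖ U† Πₖ) = D_E · Tr(U Πₖ U† Πₖ)`, and Cauchy–Schwarz over `k` gives
`|Tr U|² ≤ D_S D_E ∑ₖ Tr(U Πₖ U† Πₖ)`. Hence the form factor bound forces the average of the
return probabilities above `1/D_S`, and so one of them.
-/

open Matrix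

namespace Matrix

variable {𝕜 m n : Type*} [RCLike 𝕜] [Fintype m] [Fintype n]

theorem trace_conjTranspose_mul_eq_inner (A B : Matrix m n 𝕜) :
    (Aᴴ * B).trace =
      inner 𝕜 (WithLp.toLp 2 fun p : m × n => A p.1 p.2) (WithLp.toLp 2 fun p => B p.1 p.2) := by
  simp only [EuclideanSpace.inner_toLp_toLp, dotProduct, trace, diag, mul_apply,
    conjTranspose_apply, Fintype.sum_prod_type, Pi.star_apply]
  rw [Finset.sum_comm]
  simp [mul_comm]

open RCLike

theorem norm_trace_conjTranspose_mul_sq_le (A B : Matrix m n 𝕜) :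
    ‖(Aᴴ * B).trace‖ ^ 2 ≤ re (Aᴴ * A).trace * re (Bᴴ * B).trace := by
  simp only [trace_conjTranspose_mul_eq_inner, sq]
  nth_rewrite 2 [← norm_inner_symm]
  exact inner_mul_inner_self_le _ _

theorem norm_trace_mul_sq_le_of_isStarProjection {P : Matrix n n 𝕜} (hP : IsStarProjection P)
    (U : Matrix n n 𝕜) :
    ‖(U * P).trace‖ ^ 2 ≤ re P.trace * re (U * P * Uᴴ * P).trace := by
  have hPP : P * P = P := hP.isIdempotentElem
  have hPH : Pᴴ = P := hP.isSelfAdjoint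
  have hUP : (U * P).trace = (Pᴴ * (P * U * P)).trace := by
    calc (U * P).trace = (U * P * P).trace := by rw [mul_assoc, hPP]
      _ = (P * (U * P)).trace := trace_mul_comm _ _
      _ = (Pᴴ * (P * U * P)).trace := by simp only [hPH, ← mul_assoc, hPP]
  have hPUP : ((P * U * P)ᴴ * (P * U * P)).trace = (U * P * Uᴴ * P).trace := by
    calc ((P * U * P)ᴴ * (P * U * P)).trace = (P * (Uᴴ * P * U * P)).trace := by
          simp only [conjTranspose_mul, hPH, mul_assoc]
          rw [← mul_assoc P P, hPP]
      _ = (Uᴴ * P * (U * P)).trace := by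
          rw [trace_mul_comm, mul_assoc _ P P, hPP, mul_assoc]
      _ = (U * P * Uᴴ * P).trace := by
          rw [trace_mul_comm]
          simp only [mul_assoc]
  have hP : (Pᴴ * P).trace = P.trace := by rw [hPH, hPP]
  simpa only [hUP, hP, hPUP] using norm_trace_conjTranspose_mul_sq_le P (P * U * P)

theorem norm_trace_sq_le_card_mul_sum_of_sum_eq_one [DecidableEq n] {ι : Type*} [Fintype ι]
    {P : ι → Matrix n n 𝕜} (hP : ∀ k, IsStarProjection (P k)) (hsum : ∑ k, P k = 1)
    (U : Matrix n n 𝕜) :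
    ‖U.trace‖ ^ 2 ≤
      Fintype.card ι * ∑ k, re (P k).trace * re (U * P k * Uᴴ * P k).trace := by
  have hU : U.trace = ∑ k, (U * P k).trace := by
    rw [← trace_sum, ← Finset.mul_sum, hsum, mul_one]
  calc ‖U.trace‖ ^ 2 ≤ (∑ k, ‖(U * P k).trace‖) ^ 2 := by
        gcongr
        rw [hU]
        exact norm_sum_le _ _
    _ ≤ Fintype.card ι * ∑ k, ‖(U * P k).trace‖ ^ 2 := sq_sum_le_card_mul_sum_sq
    _ ≤ Fintype.card ι * ∑ k, re (P k).trace * re (U * P k * Uᴴ * P k).trace := by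
        gcongr with k
        exact norm_trace_mul_sq_le_of_isStarProjection (hP k) U

end Matrix

theorem stmt17_general (DS DE D : ℕ) (hD : D = DS * DE) (hDSpos : 0 < DS) (hDEpos : 0 < DE)
    (P : Fin DS → Matrix (Fin D) (Fin D) ℂ)
    (hherm : ∀ k, (P k)ᴴ = P k)
    (horth : ∀ k l, P k * P l = if k = l then P k else 0)
    (hcomp : ∑ k, P k = 1)
    (htrace : ∀ k, (P k).trace = (DE : ℂ))
    (U : Matrix (Fin D) (Fin D) ℂ)
    (hK : 1 / (DS : ℝ) < (1 / (D : ℝ) ^ 2) * ‖U.trace‖ ^ 2) :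
    ∃ k, 1 / (DS : ℝ) < (1 / (DE : ℝ)) * ((U * P k * Uᴴ * P k).trace).re := by
  have hP : ∀ k, IsStarProjection (P k) := fun k =>
    isStarProjection_iff'.mpr ⟨by simpa using horth k k, hherm k⟩
  have hbound := norm_trace_sq_le_card_mul_sum_of_sum_eq_one hP hcomp U
  simp only [htrace, RCLike.re_to_complex, Complex.natCast_re, Fintype.card_fin,
    ← Finset.mul_sum] at hbound
  have hDS : (0 : ℝ) < DS := by exact_mod_cast hDSpos
  have hDE : (0 : ℝ) < DE := by exact_mod_cast hDEpos
  have hsum : ∑ _k : Fin DS, (DE / DS : ℝ) < ∑ k, ((U * P k * Uᴴ * P k).trace).re := by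
    have hDr : (D : ℝ) = DS * DE := by exact_mod_cast hD
    rw [hDr] at hK
    rw [Finset.sum_const, Finset.card_univ, Fintype.card_fin, nsmul_eq_mul]
    field_simp at hK ⊢
    nlinarith [mul_pos hDS hDE]
  obtain ⟨k, -, hk⟩ := Finset.exists_lt_of_sum_lt hsum
  refine ⟨k, ?_⟩
  field_simp at hk ⊢
  exact hk

/-- if the spectral form factor exceeds `1/D_S`, then some coarse-grained
state has return probability exceeding the thermal value `1/D_S`, so scrambling is
impossible at that time. -/
theorem stmt17 (DS DE D : ℕ) (hD : D = DS * DE) (hDSpos : 0 < DS) (hDEpos : 0 < DE)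
    (P : Fin DS → Matrix (Fin D) (Fin D) ℂ)
    (hherm : ∀ k, (P k)ᴴ = P k)
    (horth : ∀ k l, P k * P l = if k = l then P k else 0)
    (hcomp : ∑ k, P k = 1)
    (htrace : ∀ k, (P k).trace = (DE : ℂ))
    (U : Matrix (Fin D) (Fin D) ℂ) (hU : U ∈ Matrix.unitaryGroup (Fin D) ℂ)
    (hK : 1 / (DS : ℝ) < (1 / (D : ℝ) ^ 2) * ‖U.trace‖ ^ 2) :
    ∃ k, 1 / (DS : ℝ) < (1 / (DE : ℝ)) * ((U * P k * Uᴴ * P k).trace).re :=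
  stmt17_general DS DE D hD hDSpos hDEpos P hherm horth hcomp htrace U hK
end
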